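/- arXiv:1506.04726 — 5 statements merged into one kernel-verified Lean document; each statement's English description precedes it below -/
import Mathlib

section
/- Let n ≥ 2 and let S be a finite set with |S| = n + 2. Let d ∈ ℝ and let m : (subsets of S) → ℝ. For a subset T ⊆ S let c(T) := 1 if |T| ≤ n − 1 and c(T) := 0 otherwise. For every partition of S into three nonempty parts G ⊔ J ⊔ L = S set A_{G,J,L} := d − c(G)·m_G − c(J)·m_J − c(L)·m_L + c(J∪L)·m_{J∪L} + c(J∪G)·m_{J∪G} + c(L∪G)·m_{L∪G}, and for every partition into four nonempty parts I ⊔ G ⊔ J ⊔ L = S set B_{I,G,J,L} := m_I − c(I∪G)·m_{I∪G} − c(I∪J)·m_{I∪J} − c(I∪L)·m_{I∪L} + c(I∪J∪L)·m_{I∪J∪L} + c(I∪G∪J)·m_{I∪G∪J} + c(I∪G∪L)·m_{I∪G∪L}. Assume A_{G,J,L} ≥ 0 for every partition of S into three nonempty parts and B_{I,G,J,L} ≥ 0 for every partition of S into four nonempty parts. Then for every nonempty I ⊆ S with |I| ≤ n − 1 one has 0 ≤ m_I ≤ d, and for all nonempty I ⊆ J ⊆ S with |J| ≤ n − 1 one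 has m_J ≤ m_I. (Lemma: any F-nef divisor dH − Σ_I m_I E_I on the Kapranov model of the moduli space of stable rational curves satisfies d ≥ m_I ≥ 0 and m_I ≥ m_J for I ⊆ J.) -/
/-- The combinatorial coefficient `c(T)`: equal to `1` if `|T| ≤ n - 1` and `0`
otherwise (i.e. if `|T| ≥ n`). -/
noncomputable def fCoef {S : Type*} [DecidableEq S] (n : ℕ) (T : Finset S) : ℝ :=
  if T.card ≤ n - 1 then 1 else 0

/-!
Write `w T = c(T) * m T`. Specialising `B` to `I = K`, `G = {x}`, `J = {j}` and `L` the rest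
of `S`, every term containing `L` vanishes (`K ∪ L` already has `n` elements), leaving
`w (K + x) + w (K + j) ≤ m K + w (K + x + j)`. Downward induction on `|K|` then gives
`w (K + x) ≤ w K`, so `w` is antitone on nonempty sets. As `w S = 0` this yields `m I ≥ 0` and
`m J ≤ m I`; and `A` with `G = I`, `J = {j}`, `L` the rest gives `m I ≤ d`, the two leftover
pairs of terms having the right sign by antitonicity of `w`.
-/

open Finset

lemma le_of_subset_of_forall_insert_le {α β : Type*} [DecidableEq α] [Preorder β]
    {f : Finset α → β} {I J : Finset α} (hIJ : I ⊆ J)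
    (h : ∀ K x, I ⊆ K → x ∉ K → insert x K ⊆ J → f (insert x K) ≤ f K) : f J ≤ f I := by
  suffices ∀ D ⊆ J \ I, f (I ∪ D) ≤ f I by
    simpa only [union_sdiff_of_subset hIJ] using this _ subset_rfl
  intro D
  induction D using Finset.induction_on with
  | empty => simp
  | insert a D ha ih =>
    intro hD
    obtain ⟨haJI, hDJI⟩ := insert_subset_iff.mp hD
    rw [union_insert]
    refine (h _ a subset_union_left ?_ ?_).trans (ih hDJI)
    · simp only [mem_union, not_or]
      exact ⟨(mem_sdiff.mp haJI).2, ha⟩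
    · rw [← union_insert, union_subset_iff]
      exact ⟨hIJ, hD.trans sdiff_subset⟩

section

variable {S : Type*} [DecidableEq S] {n : ℕ}

lemma fCoef_eq_one {T : Finset S} (h : #T < n) : fCoef n T = 1 := if_pos (by omega)

lemma fCoef_eq_zero {T : Finset S} (hn : 0 < n) (h : n ≤ #T) : fCoef n T = 0 :=
  if_neg (by omega)

variable [Fintype S]

def BCoeffsNonneg (n : ℕ) (m : Finset S → ℝ) : Prop :=
  ∀ I G J L : Finset S, I.Nonempty → G.Nonempty → J.Nonempty → L.Nonempty →
      Disjoint I G → Disjoint I J → Disjoint I L →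
      Disjoint G J → Disjoint G L → Disjoint J L → I ∪ G ∪ J ∪ L = Finset.univ →
      0 ≤ m I - fCoef n (I ∪ G) * m (I ∪ G) - fCoef n (I ∪ J) * m (I ∪ J)
        - fCoef n (I ∪ L) * m (I ∪ L) + fCoef n (I ∪ J ∪ L) * m (I ∪ J ∪ L)
        + fCoef n (I ∪ G ∪ J) * m (I ∪ G ∪ J) + fCoef n (I ∪ G ∪ L) * m (I ∪ G ∪ L)

def ACoeffsNonneg (n : ℕ) (d : ℝ) (m : Finset S → ℝ) : Prop :=
  ∀ G J L : Finset S, G.Nonempty → J.Nonempty → L.Nonempty →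
      Disjoint G J → Disjoint G L → Disjoint J L → G ∪ J ∪ L = Finset.univ →
      0 ≤ d - fCoef n G * m G - fCoef n J * m J - fCoef n L * m L
        + fCoef n (J ∪ L) * m (J ∪ L) + fCoef n (J ∪ G) * m (J ∪ G)
        + fCoef n (L ∪ G) * m (L ∪ G)

variable (hS : Fintype.card S = n + 2) {m : Finset S → ℝ}
include hS

lemma fCoef_mul_insert_add_fCoef_mul_insert_le (hB : BCoeffsNonneg n m) {K : Finset S}
    (hK : K.Nonempty) (hKn : #K < n) {x j : S} (hx : x ∉ K) (hj : j ∉ K) (hxj : x ≠ j) :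
    fCoef n (insert x K) * m (insert x K) + fCoef n (insert j K) * m (insert j K) ≤
      m K + fCoef n (insert x (insert j K)) * m (insert x (insert j K)) := by
  set L := (insert x (insert j K))ᶜ
  have hxjK : x ∉ insert j K := by simp [hx, hxj]
  have hL : #L = n - #K := by
    rw [card_compl, card_insert_of_notMem hxjK, card_insert_of_notMem hj, hS]; omega
  have hKL : Disjoint K L :=
    disjoint_compl_right_iff.mpr ((subset_insert j K).trans (subset_insert x _))
  have hxL : Disjoint {x} L := disjoint_compl_right_iff.mpr (by simp)
  have hjL : Disjoint {j} L := disjoint_compl_right_iff.mpr (by simp)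
  have hnKL : n ≤ #(K ∪ L) := by rw [card_union_of_disjoint hKL]; omega
  have hzero : ∀ T, K ∪ L ⊆ T → fCoef n T = 0 := fun T hT =>
    fCoef_eq_zero (by omega) (hnKL.trans (card_le_card hT))
  have hBK := hB K {x} {j} L hK (singleton_nonempty x) (singleton_nonempty j)
    (card_pos.mp (by omega)) (by simpa) (by simpa) hKL (by simpa [eq_comm]) hxL hjL
    (by ext; simp [L]; tauto)
  rw [hzero (K ∪ L) subset_rfl, hzero (K ∪ {j} ∪ L) (by grind),
    hzero (K ∪ {x} ∪ L) (by grind)] at hBK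
  simp only [union_singleton, insert_comm j x] at hBK
  linarith

lemma fCoef_mul_insert_le (hn : 0 < n) (hB : BCoeffsNonneg n m) {K : Finset S}
    (hK : K.Nonempty) {x : S} (hx : x ∉ K) :
    fCoef n (insert x K) * m (insert x K) ≤ fCoef n K * m K := by
  by_cases hKn : n ≤ #K
  · rw [fCoef_eq_zero hn hKn, fCoef_eq_zero hn (hKn.trans (card_le_card (subset_insert x K))),
      zero_mul, zero_mul]
  obtain ⟨j, hj⟩ : (insert x K)ᶜ.Nonempty := by
    rw [← card_pos, card_compl, card_insert_of_notMem hx, hS]; omega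
  obtain ⟨hjx, hjK⟩ : j ≠ x ∧ j ∉ K := by simpa using hj
  have hjxK : fCoef n (insert x (insert j K)) * m (insert x (insert j K)) ≤
      fCoef n (insert j K) * m (insert j K) :=
    fCoef_mul_insert_le hn hB (hK.mono (subset_insert j K)) (by simp [hx, hjx.symm])
  have hBK := fCoef_mul_insert_add_fCoef_mul_insert_le hS hB hK (by omega) hx hjK hjx.symm
  rw [fCoef_eq_one (T := K) (by omega), one_mul]
  linarith
termination_by n - #K
decreasing_by rw [card_insert_of_notMem hjK]; omega

lemma fCoef_mul_le_of_subset (hn : 0 < n) (hB : BCoeffsNonneg n m) {I J : Finset S}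
    (hI : I.Nonempty) (hIJ : I ⊆ J) : fCoef n J * m J ≤ fCoef n I * m I :=
  le_of_subset_of_forall_insert_le (f := fun T => fCoef n T * m T) hIJ fun _ _ hIK hx _ =>
    fCoef_mul_insert_le hS hn hB (hI.mono hIK) hx

lemma nonneg_of_bCoeffsNonneg (hB : BCoeffsNonneg n m) {I : Finset S} (hI : I.Nonempty)
    (hIn : #I < n) : 0 ≤ m I := by
  have := fCoef_mul_le_of_subset hS (by omega) hB hI (subset_univ I)
  rwa [fCoef_eq_zero (by omega) (by rw [card_univ, hS]; omega), zero_mul,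
    fCoef_eq_one hIn, one_mul] at this

lemma le_of_subset_of_bCoeffsNonneg (hB : BCoeffsNonneg n m) {I J : Finset S} (hI : I.Nonempty)
    (hIJ : I ⊆ J) (hJn : #J < n) : m J ≤ m I := by
  have := fCoef_mul_le_of_subset hS (by omega) hB hI hIJ
  rwa [fCoef_eq_one hJn, fCoef_eq_one ((card_le_card hIJ).trans_lt hJn), one_mul,
    one_mul] at this

lemma le_of_aCoeffsNonneg {d : ℝ} (hn : 2 ≤ n) (hA : ACoeffsNonneg n d m)
    (hB : BCoeffsNonneg n m) {I : Finset S} (hI : I.Nonempty) (hIn : #I < n) : m I ≤ d := by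
  have hIc : #Iᶜ = n + 2 - #I := by rw [card_compl, hS]
  obtain ⟨j, hj⟩ : Iᶜ.Nonempty := by rw [← card_pos]; omega
  set L := Iᶜ.erase j
  have hL : #L = n + 1 - #I := by rw [card_erase_of_mem hj]; omega
  have hjL : {j} ∪ L = Iᶜ := by rw [← insert_eq, insert_erase hj]
  have hLne : L.Nonempty := card_pos.mp (by omega)
  have hIL : Disjoint I L := disjoint_compl_right.mono_right (erase_subset j _)
  have hAI := hA I {j} L hI (singleton_nonempty j) hLne
    (disjoint_singleton_right.mpr (mem_compl.mp hj)) hIL (by simp [L])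
    (by rw [union_assoc, hjL, union_compl])
  have hj1 : fCoef n {j} = 1 := fCoef_eq_one (by simp; omega)
  rw [hjL, hj1, fCoef_eq_one (T := I) hIn,
    fCoef_eq_zero (T := L ∪ I) (by omega) (by rw [card_union_of_disjoint hIL.symm]; omega)]
    at hAI
  have hjI := fCoef_mul_le_of_subset hS (by omega) hB (singleton_nonempty j)
    (subset_union_left : {j} ⊆ {j} ∪ I)
  have hLI := fCoef_mul_le_of_subset hS (by omega) hB hLne (erase_subset j Iᶜ)
  rw [hj1] at hjI
  linarith

end

/-- Any F-nef divisor `dH - Σ_I m_I E_I` on the Kapranov model of `M‾₀,ₙ₊₃`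
(iterated blow-up of `ℙⁿ` along the linear spans of subsets of `n + 2` general points)
satisfies `0 ≤ m_I ≤ d` and `m_J ≤ m_I` for `I ⊆ J`. -/
theorem stmt_7 (n : ℕ) (hn : 2 ≤ n) (S : Type*) [Fintype S] [DecidableEq S]
    (hS : Fintype.card S = n + 2) (d : ℝ) (m : Finset S → ℝ)
    (hA : ∀ G J L : Finset S, G.Nonempty → J.Nonempty → L.Nonempty →
      Disjoint G J → Disjoint G L → Disjoint J L → G ∪ J ∪ L = Finset.univ →
      0 ≤ d - fCoef n G * m G - fCoef n J * m J - fCoef n L * m L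
        + fCoef n (J ∪ L) * m (J ∪ L) + fCoef n (J ∪ G) * m (J ∪ G)
        + fCoef n (L ∪ G) * m (L ∪ G))
    (hB : ∀ I G J L : Finset S, I.Nonempty → G.Nonempty → J.Nonempty → L.Nonempty →
      Disjoint I G → Disjoint I J → Disjoint I L →
      Disjoint G J → Disjoint G L → Disjoint J L → I ∪ G ∪ J ∪ L = Finset.univ →
      0 ≤ m I - fCoef n (I ∪ G) * m (I ∪ G) - fCoef n (I ∪ J) * m (I ∪ J)
        - fCoef n (I ∪ L) * m (I ∪ L) + fCoef n (I ∪ J ∪ L) * m (I ∪ J ∪ L)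
        + fCoef n (I ∪ G ∪ J) * m (I ∪ G ∪ J) + fCoef n (I ∪ G ∪ L) * m (I ∪ G ∪ L)) :
    (∀ I : Finset S, I.Nonempty → I.card ≤ n - 1 → 0 ≤ m I ∧ m I ≤ d) ∧
    (∀ I J : Finset S, I.Nonempty → I ⊆ J → J.card ≤ n - 1 → m J ≤ m I) :=
  ⟨fun _ hI hIn => ⟨nonneg_of_bCoeffsNonneg hS hB hI (by omega),
      le_of_aCoeffsNonneg hS hn hA hB hI (by omega)⟩,
    fun _ _ hI hIJ hJn => le_of_subset_of_bCoeffsNonneg hS hB hI hIJ (by omega)⟩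
end

section
/- Let n ≥ 4 and s = n + 3, let ε be a positive rational number, and let d, m_1, …, m_{n+3} be integers satisfying ε·m_i ≥ n − 1 for every i and ε·(m_i + m_j − d) ≤ n − 3 for all i ≠ j. For a subset I ⊆ {1,…,n+3} and an integer t ≥ 1 with r_{I,σ_t} := |I| + 2t − 1 ≤ n, set k_{I,σ_t} := max{0, t·Σ_{i=1}^{n+3} m_i + Σ_{i∈I} m_i − ((n+1)·t + |I| − 1)·d}. Then ε·k_{I,σ_t} ≤ max{0, n − 1 − 2·r_{I,σ_t}}. In particular, for every t ≥ 1 and every I with |I| = n − 2t + 1, one has k_{I,σ_t} = 0. (This is the key inequality 'low mult of joins': the strict transform of D meets the blow-up of the joins J(L_I, σ_t) of linear cycles with secant varieties of the rational normal curve with small multiplicity, which yields log-canonicity of (X_{n+3,(0)}, εD).) -/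
/-!
Put `xᵢ = ε mᵢ` and `δ = ε d`. Summing the pair conditions `xᵢ + xⱼ - δ ≤ n - 3` over all pairs,
and over the pairs meeting `I`, and summing the lower bounds `xᵢ ≥ n - 1`, gives three linear
inequalities in `Σ xᵢ`, `Σ_{i ∈ I} xᵢ` and `δ`. A nonnegative combination of them, with weights
depending only on `n`, `t` and `|I|`, is exactly `ε k_{I,σ_t} ≤ n - 1 - 2 r_{I,σ_t}`; when
`r_{I,σ_t} = n` the right-hand side is negative, which forces `k_{I,σ_t} = 0`.
-/

open Finset

section PairBound

variable {ι : Type*} [Fintype ι] [DecidableEq ι] {x : ι → ℚ} {δ a : ℚ}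

lemma sum_bound_of_pair_bound (hpair : ∀ i j, i ≠ j → x i + x j - δ ≤ a) (i : ι) :
    (Fintype.card ι - 2) * x i + ∑ j, x j - (Fintype.card ι - 1) * δ ≤
      (Fintype.card ι - 1) * a := by
  have hsum : ∑ j ∈ univ.erase i, (x i + x j - δ) ≤ ∑ _j ∈ univ.erase i, a :=
    sum_le_sum fun j hj => hpair i j (ne_of_mem_erase hj).symm
  have hcard : ((univ.erase i).card : ℚ) = Fintype.card ι - 1 := by
    rw [eq_sub_iff_add_eq, ← Nat.cast_add_one, card_erase_add_one (mem_univ i), card_univ]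
  rw [sum_erase_eq_sub (mem_univ i), sum_const, nsmul_eq_mul, hcard, sum_sub_distrib,
    sum_add_distrib, sum_const, sum_const, card_univ, nsmul_eq_mul, nsmul_eq_mul] at hsum
  linarith

lemma sum_bound_of_pair_bound_on (hpair : ∀ i j, i ≠ j → x i + x j - δ ≤ a) (I : Finset ι) :
    (Fintype.card ι - 2) * ∑ i ∈ I, x i + #I * ∑ j, x j - #I * (Fintype.card ι - 1) * δ ≤
      #I * (Fintype.card ι - 1) * a := by
  have hsum := sum_le_sum fun i (_ : i ∈ I) => sum_bound_of_pair_bound hpair i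
  rw [sum_sub_distrib, sum_add_distrib, ← mul_sum, sum_const, sum_const, sum_const,
    nsmul_eq_mul, nsmul_eq_mul, nsmul_eq_mul] at hsum
  linarith

lemma two_mul_sum_sub_le_of_pair_bound [Nontrivial ι]
    (hpair : ∀ i j, i ≠ j → x i + x j - δ ≤ a) :
    2 * ∑ i, x i - Fintype.card ι * δ ≤ Fintype.card ι * a := by
  have hN : (1 : ℚ) < Fintype.card ι := by exact_mod_cast Fintype.one_lt_card
  have h := sum_bound_of_pair_bound_on hpair univ
  rw [card_univ] at h
  nlinarith

end PairBound

lemma scaled_joinMult_le {n t c s T δ : ℚ} (hn : 3 ≤ n) (ht : 1 ≤ t) (hc : 0 ≤ c)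
    (hr : c + 2 * t ≤ n + 1)
    (hA : 2 * s - (n + 3) * δ ≤ (n + 3) * (n - 3))
    (hB : (n + 1) * T + c * s - c * (n + 2) * δ ≤ c * (n + 2) * (n - 3))
    (hC : (n + 3) * (n - 1) ≤ s) :
    t * s + T - ((n + 1) * t + c - 1) * δ ≤ n - 1 - 2 * (c + 2 * t - 1) := by
  have wA : 0 ≤ (n + 1) ^ 2 * t - c - n - 1 := by nlinarith
  have wC : 0 ≤ (n + 1) * ((n - 1) * t + c - 2) := by nlinarith
  have hcomb : (n + 1) * (n + 3) *
        (n - 1 - 2 * (c + 2 * t - 1) - (t * s + T - ((n + 1) * t + c - 1) * δ)) =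
      ((n + 1) ^ 2 * t - c - n - 1) * ((n + 3) * (n - 3) - (2 * s - (n + 3) * δ)) +
      (n + 3) * (c * (n + 2) * (n - 3) - ((n + 1) * T + c * s - c * (n + 2) * δ)) +
      (n + 1) * ((n - 1) * t + c - 2) * (s - (n + 3) * (n - 1)) := by ring
  have hnonneg : 0 ≤ (n + 1) * (n + 3) *
      (n - 1 - 2 * (c + 2 * t - 1) - (t * s + T - ((n + 1) * t + c - 1) * δ)) := by
    rw [hcomb]
    have := mul_nonneg wA (sub_nonneg.mpr hA)
    have := mul_nonneg (by linarith : (0 : ℚ) ≤ n + 3) (sub_nonneg.mpr hB)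
    have := mul_nonneg wC (sub_nonneg.mpr hC)
    linarith
  rw [mul_nonneg_iff_of_pos_left (by nlinarith)] at hnonneg
  linarith

/-- The paper's `k_{I,σ_t}`. -/
def joinMult (n : ℕ) (d : ℤ) (m : Fin (n + 3) → ℤ) (I : Finset (Fin (n + 3))) (t : ℕ) : ℚ :=
  max 0 ((t : ℚ) * (∑ i, (m i : ℚ)) + (∑ i ∈ I, (m i : ℚ)) -
    (((n : ℚ) + 1) * t + (I.card : ℚ) - 1) * (d : ℚ))

lemma mul_joinMult_le {n : ℕ} (hn : 3 ≤ n) {ε : ℚ} (hε : 0 ≤ ε) {d : ℤ} {m : Fin (n + 3) → ℤ}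
    (h1 : ∀ i, (n : ℚ) - 1 ≤ ε * (m i : ℚ))
    (h2 : ∀ i j, i ≠ j → ε * ((m i : ℚ) + (m j : ℚ) - (d : ℚ)) ≤ (n : ℚ) - 3)
    (I : Finset (Fin (n + 3))) (t : ℕ) (ht : 1 ≤ t) (hr : #I + 2 * t - 1 ≤ n) :
    ε * joinMult n d m I t ≤ max 0 ((n : ℚ) - 1 - 2 * ((#I : ℚ) + 2 * t - 1)) := by
  have hpair : ∀ i j, i ≠ j → ε * m i + ε * m j - ε * d ≤ (n : ℚ) - 3 := fun i j hij => by
    simpa only [mul_add, mul_sub] using h2 i j hij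
  have hN : (Fintype.card (Fin (n + 3)) : ℚ) = n + 3 := by simp
  have hA := two_mul_sum_sub_le_of_pair_bound hpair
  have hB := sum_bound_of_pair_bound_on hpair I
  have hC : ((n : ℚ) + 3) * (n - 1) ≤ ∑ i, ε * m i := by
    have h := sum_le_sum fun i (_ : i ∈ univ) => h1 i
    rwa [sum_const, card_univ, Fintype.card_fin, nsmul_eq_mul, Nat.cast_add, Nat.cast_ofNat] at h
  rw [hN] at hA hB
  have hn' : (3 : ℚ) ≤ n := by exact_mod_cast hn
  have hr' : (#I : ℚ) + 2 * t ≤ n + 1 := by exact_mod_cast (by omega : #I + 2 * t ≤ n + 1)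
  have key := scaled_joinMult_le (s := ∑ i, ε * m i) (T := ∑ i ∈ I, ε * m i) (δ := ε * d)
    hn' (by exact_mod_cast ht) (by positivity) hr' (by linarith) (by linarith) hC
  rw [joinMult, mul_max_of_nonneg _ _ hε, mul_zero]
  refine max_le_max le_rfl ?_
  simp only [← mul_sum] at key
  linarith

/-- Key inequality "low mult of joins": under the log-canonicity hypotheses
`ε·mᵢ ≥ n - 1` and `ε·(mᵢ + mⱼ - d) ≤ n - 3`, for every `I ⊆ {1,…,n+3}` and `t ≥ 1` with
`r_{I,σ_t} = |I| + 2t - 1 ≤ n` one has `ε·k_{I,σ_t} ≤ max{0, n - 1 - 2·r_{I,σ_t}}`,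
where `k_{I,σ_t} = max{0, t·Σᵢ mᵢ + Σ_{i∈I} mᵢ - ((n+1)t + |I| - 1)d}`. In particular
`k_{I,σ_t} = 0` whenever `|I| = n - 2t + 1`. -/
theorem stmt_9 (n : ℕ) (hn : 4 ≤ n)
    (ε : ℚ) (hε : 0 < ε) (d : ℤ) (m : Fin (n + 3) → ℤ)
    (h1 : ∀ i, (n : ℚ) - 1 ≤ ε * (m i : ℚ))
    (h2 : ∀ i j, i ≠ j → ε * ((m i : ℚ) + (m j : ℚ) - (d : ℚ)) ≤ (n : ℚ) - 3) :
    (∀ (I : Finset (Fin (n + 3))) (t : ℕ), 1 ≤ t → I.card + 2 * t - 1 ≤ n →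
      ε * max 0 ((t : ℚ) * (∑ i, (m i : ℚ)) + (∑ i ∈ I, (m i : ℚ)) -
          (((n : ℚ) + 1) * t + (I.card : ℚ) - 1) * (d : ℚ)) ≤
        max 0 ((n : ℚ) - 1 - 2 * ((I.card : ℚ) + 2 * t - 1))) ∧
    (∀ (I : Finset (Fin (n + 3))) (t : ℕ), 1 ≤ t → (I.card : ℤ) = (n : ℤ) - 2 * t + 1 →
      max 0 ((t : ℚ) * (∑ i, (m i : ℚ)) + (∑ i ∈ I, (m i : ℚ)) -
          (((n : ℚ) + 1) * t + (I.card : ℚ) - 1) * (d : ℚ)) = 0) := by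
  refine ⟨mul_joinMult_le (by omega) hε.le h1 h2, fun I t ht hI => ?_⟩
  have hIq : (#I : ℚ) = n - 2 * t + 1 := by exact_mod_cast hI
  have h := (mul_joinMult_le (by omega) hε.le h1 h2 I t ht (by omega)).trans_eq
    (max_eq_left (by rw [hIq]; linarith))
  exact le_antisymm (nonpos_of_mul_nonpos_right h hε) (le_max_left _ _)
end

section
/- Let ν ≥ 2 and set n = 2ν. Let ε be a rational number with 0 < ε ≤ 2/ν, and let d, m_1, …, m_{2ν+3} be integers satisfying ε·m_i ≥ 2ν − 1 for every i and ε·(m_i + m_j − d) ≤ 2ν − 3 for all i ≠ j. Set k_C := max{0, Σ_{i=1}^{2ν+3} m_i − 2ν·d}. Then there exists an integer α ≥ 0 such that k_C ≤ ν·α, ν·α ≤ m_i for every i, and α ≤ d − m_i for every i. (Existence of the integer α with k_C/ν ≤ α ≤ min_i{m_i/ν, d − m_i} used to split off α copies of the smooth strict transform of the ν-th secant variety σ_ν, of class (ν+1)H − ν·Σ E_i, in the even-dimensional case of the abundance theorem.) -/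
/-!
Averaging the pair conditions `ε (mᵢ + mⱼ - d) ≤ 2ν - 3` over all ordered pairs gives
`ε (2 ∑ mᵢ - (2ν + 3) d) ≤ (2ν + 3)(2ν - 3)`; together with `ε (d - mᵢ) ≥ 2` and
`ε mᵢ ≥ 2ν - 1` this gives `k_C + ν ≤ mᵢ`, and a single pair gives `mⱼ ≤ ν (d - mᵢ)` for `j ≠ i`. Hence the least
multiple `να ≥ k_C` of `ν` is still at most every `mⱼ`, and so `α ≤ d - mᵢ`.
-/

open Finset

theorem two_mul_sum_le_card_mul_of_add_le {ι K : Type*} [Fintype ι] [CommRing K] [LinearOrder K]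
    [IsStrictOrderedRing K] {x : ι → K} {c : K} (hι : 2 ≤ Fintype.card ι)
    (h : ∀ i j, i ≠ j → x i + x j ≤ c) :
    2 * ∑ i, x i ≤ Fintype.card ι * c := by
  classical
  have hrow : ∀ i,
      ∑ j ∈ univ.erase i, (x i + x j) = ((Fintype.card ι : K) - 2) * x i + ∑ j, x j := by
    intro i
    rw [sum_erase_eq_sub (mem_univ i), sum_add_distrib, sum_const, card_univ, nsmul_eq_mul]
    ring
  have hpairs : ∑ i, ∑ j ∈ univ.erase i, (x i + x j) ≤ ∑ i, ∑ _j ∈ univ.erase i, c :=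
    sum_le_sum fun i _ => sum_le_sum fun j hj => h i j (ne_of_mem_erase hj).symm
  simp only [hrow, sum_add_distrib, ← mul_sum, sum_const, card_erase_of_mem (mem_univ _),
    card_univ, nsmul_eq_mul] at hpairs
  have hN : (2 : K) ≤ Fintype.card ι := by exact_mod_cast hι
  rw [Nat.cast_sub (by omega), Nat.cast_one] at hpairs
  refine le_of_mul_le_mul_left (a := (Fintype.card ι : K) - 1) ?_ (by linarith)
  linear_combination hpairs

section PairConditions

variable {ι : Type*} {ν : ℕ} {ε : ℚ} {d : ℤ} {m : ι → ℤ}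

theorem mul_add_two_le_mul_of_pair
    (h1 : ∀ i, 2 * (ν : ℚ) - 1 ≤ ε * (m i : ℚ))
    (h2 : ∀ i j, i ≠ j → ε * ((m i : ℚ) + (m j : ℚ) - (d : ℚ)) ≤ 2 * (ν : ℚ) - 3)
    {i j : ι} (hij : i ≠ j) : ε * m i + 2 ≤ ε * d := by
  linarith [h1 j, h2 i j hij]

theorem le_mul_sub_of_pair (hν : 1 ≤ ν) (hε0 : 0 < ε)
    (h1 : ∀ i, 2 * (ν : ℚ) - 1 ≤ ε * (m i : ℚ))
    (h2 : ∀ i j, i ≠ j → ε * ((m i : ℚ) + (m j : ℚ) - (d : ℚ)) ≤ 2 * (ν : ℚ) - 3)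
    {i j : ι} (hij : i ≠ j) : m j ≤ ν * (d - m i) := by
  have hν' : (1 : ℚ) ≤ ν := by exact_mod_cast hν
  have key : ε * m j ≤ ε * (ν * (d - m i)) := by
    linarith [mul_le_mul_of_nonneg_left (h1 j) (by linarith : (0 : ℚ) ≤ ν - 1),
      mul_le_mul_of_nonneg_left (h2 i j hij) (by linarith : (0 : ℚ) ≤ ν)]
  exact_mod_cast le_of_mul_le_mul_left key hε0

theorem nu_le_of_le_two_div (hν : 2 ≤ ν) (hε0 : 0 < ε) (hε : ε ≤ 2 / (ν : ℚ))
    (h1 : ∀ i, 2 * (ν : ℚ) - 1 ≤ ε * (m i : ℚ)) (i : ι) : (ν : ℤ) ≤ m i := by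
  have hν' : (2 : ℚ) ≤ ν := by exact_mod_cast hν
  have hεν : ε * ν ≤ 2 := (le_div_iff₀ (by linarith)).mp hε
  have key : ε * ν ≤ ε * m i := by linarith [h1 i]
  exact_mod_cast le_of_mul_le_mul_left key hε0

theorem sum_sub_add_nu_le [Fintype ι] (hι : Fintype.card ι = 2 * ν + 3)
    (hν : 2 ≤ ν) (hε0 : 0 < ε) (hε : ε ≤ 2 / (ν : ℚ))
    (h1 : ∀ i, 2 * (ν : ℚ) - 1 ≤ ε * (m i : ℚ))
    (h2 : ∀ i j, i ≠ j → ε * ((m i : ℚ) + (m j : ℚ) - (d : ℚ)) ≤ 2 * (ν : ℚ) - 3) (i : ι) :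
    (∑ j, m j) - 2 * ν * d + ν ≤ m i := by
  have hν' : (2 : ℚ) ≤ ν := by exact_mod_cast hν
  have hεν : ε * ν ≤ 2 := (le_div_iff₀ (by linarith)).mp hε
  have hsum : 2 * ∑ j, ε * (m j : ℚ) ≤ (2 * ν + 3) * (2 * ν - 3 + ε * d) := by
    simpa [hι] using two_mul_sum_le_card_mul_of_add_le (x := fun j => ε * (m j : ℚ))
      (c := 2 * ν - 3 + ε * d) (by omega) fun j k hjk => by linarith [h2 j k hjk]
  have : Nontrivial ι := Fintype.one_lt_card_iff_nontrivial.mp (by omega)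
  obtain ⟨j, hij⟩ := exists_ne i
  have hB := mul_add_two_le_mul_of_pair h1 h2 hij.symm
  have key : ε * ((∑ j, (m j : ℚ)) - 2 * ν * d + ν) ≤ ε * m i := by
    rw [← mul_sum] at hsum
    linarith [mul_le_mul_of_nonneg_left hB (by linarith : (0 : ℚ) ≤ 2 * ν - 3),
      mul_le_mul_of_nonneg_left (h1 i) (by linarith : (0 : ℚ) ≤ 2 * ν - 1)]
  exact_mod_cast le_of_mul_le_mul_left key hε0

end PairConditions

/-- Existence of the integer `α` with `k_C/ν ≤ α ≤ min_i{mᵢ/ν, d - mᵢ}` used to split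
off `α` copies of the strict transform of the `ν`-th secant variety `σ_ν` in the
even-dimensional (`n = 2ν`) case of the abundance theorem. -/
theorem stmt_10 (ν : ℕ) (hν : 2 ≤ ν)
    (ε : ℚ) (hε0 : 0 < ε) (hε : ε ≤ 2 / (ν : ℚ))
    (d : ℤ) (m : Fin (2 * ν + 3) → ℤ)
    (h1 : ∀ i, 2 * (ν : ℚ) - 1 ≤ ε * (m i : ℚ))
    (h2 : ∀ i j, i ≠ j → ε * ((m i : ℚ) + (m j : ℚ) - (d : ℚ)) ≤ 2 * (ν : ℚ) - 3) :
    ∃ α : ℤ, 0 ≤ α ∧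
      max 0 ((∑ i, m i) - 2 * (ν : ℤ) * d) ≤ (ν : ℤ) * α ∧
      (∀ i, (ν : ℤ) * α ≤ m i) ∧
      (∀ i, α ≤ d - m i) := by
  set k := max 0 ((∑ i, m i) - 2 * (ν : ℤ) * d)
  have hν0 : (0 : ℤ) < ν := by omega
  have hk : ∀ i, k + ν ≤ m i := fun i => by
    have := sum_sub_add_nu_le (Fintype.card_fin _) hν hε0 hε h1 h2 i
    have := nu_le_of_le_two_div hν hε0 hε h1 i
    omega
  obtain ⟨α, ⟨hkα, hαk⟩, -⟩ := existsUnique_add_zsmul_mem_Ico hν0 0 k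
  rw [zero_add, smul_eq_mul, mul_comm] at hkα hαk
  have hαm : ∀ i, (ν : ℤ) * α ≤ m i := fun i => by linarith [hk i]
  refine ⟨α, nonneg_of_mul_nonneg_right (by omega) hν0, hkα, hαm, fun i => ?_⟩
  obtain ⟨j, hji⟩ := exists_ne i
  exact le_of_mul_le_mul_left
    ((hαm j).trans (le_mul_sub_of_pair (by omega) hε0 h1 h2 hji.symm)) hν0
end

section
/- Let ν ≥ 2 and set n = 2ν + 1. Let ε be a rational number with 0 < ε ≤ 2/(ν² + ν), and let d, m_1, …, m_{2ν+4} be integers satisfying ε·m_i ≥ 2ν for every i and ε·(m_i + m_j − d) ≤ 2ν − 2 for all i ≠ j. Set k_C := max{0, Σ_{i=1}^{2ν+4} m_i − (2ν+1)·d}. Then there exists an integer β ≥ 0 such that k_C ≤ ν·β, (ν+1)·β ≤ m_1, ν·β ≤ m_i for every i ≥ 2, and β ≤ d − m_i for every i. (Existence of the integer β used to split off β copies of the strict transform of the pointed cone J(L_{{1}}, σ_ν) over the ν-th secant variety, of class (ν+1)H − (ν+1)E_1 − ν·Σ_{i≥2} E_i, in the odd-dimensional case of the abundance theorem.) -/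
/-!
Write `K = Σ mᵢ - (2ν+1)d`. Summing the pair conditions along a fixed-point-free permutation of
the `2ν+4` indices, together with `ε d ≥ 2ν + 2`, gives `ε K ≤ 2ν - 2`. Take `β = ⌈max 0 K / ν⌉`;
then `ε ν β < 2ν - 2 + ε ν`, and since `ε ν (ν + 1) ≤ 2` this is small enough to be dominated by
`ε ν mᵢ ≥ 2ν²` and by `ε ν (d - mᵢ) ≥ 2ν`, the latter from pairing `i` with any other index.
-/

open Finset

theorem two_nsmul_sum_le_card_nsmul_of_add_le {ι α : Type*} [Fintype ι] [AddCommMonoid α]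
    [PartialOrder α] [IsOrderedAddMonoid α] {σ : Equiv.Perm ι} (hσ : ∀ i, σ i ≠ i)
    {f : ι → α} {B : α} (h : ∀ i j, i ≠ j → f i + f j ≤ B) :
    2 • ∑ i, f i ≤ Fintype.card ι • B := calc
  2 • ∑ i, f i = ∑ i, (f i + f (σ i)) := by
    rw [two_nsmul, sum_add_distrib, Equiv.sum_comp σ f]
  _ ≤ ∑ _i : ι, B := sum_le_sum fun i _ => h i (σ i) (hσ i).symm
  _ = Fintype.card ι • B := by rw [sum_const, card_univ]

theorem finRotate_apply_ne (n : ℕ) (i : Fin (n + 2)) : finRotate (n + 2) i ≠ i := by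
  rw [← Equiv.Perm.mem_support, support_finRotate]
  exact mem_univ i

theorem exists_nonneg_mul_mem_Ico {ν : ℕ} (hν : 0 < ν) {K : ℤ} (hK : 0 ≤ K) :
    ∃ β : ℤ, 0 ≤ β ∧ K ≤ ν * β ∧ (ν * β : ℚ) < K + ν := by
  have hνQ : (0 : ℚ) < ν := by exact_mod_cast hν
  refine ⟨⌈(K : ℚ) / ν⌉, Int.ceil_nonneg (by positivity), ?_, ?_⟩
  · have : (K : ℚ) ≤ ν * ⌈(K : ℚ) / ν⌉ := (div_le_iff₀' hνQ).1 (Int.le_ceil _)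
    exact_mod_cast this
  · have := mul_lt_mul_of_pos_left (Int.ceil_lt_add_one ((K : ℚ) / ν)) hνQ
    rwa [mul_add, mul_div_cancel₀ _ hνQ.ne', mul_one] at this

section Abundance

variable {ν : ℕ} {ε : ℚ}

theorem pos_of_le_two_div (hε0 : 0 < ε) (hε : ε ≤ 2 / ((ν : ℚ) ^ 2 + ν)) : 0 < ν := by
  rcases Nat.eq_zero_or_pos ν with rfl | hν
  · norm_num at hε; linarith
  · exact hν

theorem mul_mul_succ_le_two (hε0 : 0 < ε) (hε : ε ≤ 2 / ((ν : ℚ) ^ 2 + ν)) :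
    ε * ν * (ν + 1) ≤ 2 := by
  have hν : (0 : ℚ) < ν := by exact_mod_cast pos_of_le_two_div hε0 hε
  have := (le_div_iff₀ (by positivity)).1 hε
  linarith

variable {ι : Type*} {d : ℤ} {m : ι → ℤ}
  (h1 : ∀ i, 2 * (ν : ℚ) ≤ ε * (m i : ℚ))
  (h2 : ∀ i j, i ≠ j → ε * ((m i : ℚ) + (m j : ℚ) - (d : ℚ)) ≤ 2 * (ν : ℚ) - 2)
include h1 h2

theorem two_le_mul_sub [Nontrivial ι] (i : ι) : 2 ≤ ε * ((d : ℚ) - m i) := by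
  obtain ⟨j, hj⟩ := exists_ne i
  linarith [h1 j, h2 i j hj.symm]

theorem mul_max_zero_sum_sub_le [Fintype ι] (hι : Fintype.card ι = 2 * ν + 4) (hν : 0 < ν)
    {σ : Equiv.Perm ι} (hσ : ∀ i, σ i ≠ i) :
    ε * (max 0 ((∑ i, m i) - (2 * (ν : ℤ) + 1) * d) : ℤ) ≤ 2 * ν - 2 := by
  have hν1 : (1 : ℚ) ≤ ν := by exact_mod_cast hν
  have : Nontrivial ι := Fintype.one_lt_card_iff_nontrivial.1 (by omega)
  obtain ⟨i₀⟩ := (inferInstance : Nonempty ι)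
  have hd : 2 * (ν : ℚ) + 2 ≤ ε * d := by linarith [h1 i₀, two_le_mul_sub h1 h2 i₀]
  have hpairs := two_nsmul_sum_le_card_nsmul_of_add_le hσ (f := fun i => ε * m i)
    (B := 2 * ν - 2 + ε * d) fun i j hij => by linarith [h2 i j hij]
  rw [hι, nsmul_eq_mul, nsmul_eq_mul, ← mul_sum] at hpairs
  rcases max_choice 0 ((∑ i, m i) - (2 * (ν : ℤ) + 1) * d) with h | h <;> rw [h]
  · push_cast; linarith
  · push_cast at hpairs ⊢
    nlinarith [mul_le_mul_of_nonneg_left hd (by linarith : (0 : ℚ) ≤ ν - 1)]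

end Abundance

theorem stmt_11_general (ν : ℕ)
    (ε : ℚ) (hε0 : 0 < ε) (hε : ε ≤ 2 / ((ν : ℚ) ^ 2 + (ν : ℚ)))
    (d : ℤ) (m : Fin (2 * ν + 4) → ℤ)
    (h1 : ∀ i, 2 * (ν : ℚ) ≤ ε * (m i : ℚ))
    (h2 : ∀ i j, i ≠ j → ε * ((m i : ℚ) + (m j : ℚ) - (d : ℚ)) ≤ 2 * (ν : ℚ) - 2) :
    ∃ β : ℤ, 0 ≤ β ∧
      max 0 ((∑ i, m i) - (2 * (ν : ℤ) + 1) * d) ≤ (ν : ℤ) * β ∧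
      ((ν : ℤ) + 1) * β ≤ m 0 ∧
      (∀ i : Fin (2 * ν + 4), i ≠ 0 → (ν : ℤ) * β ≤ m i) ∧
      (∀ i, β ≤ d - m i) := by
  have hν := pos_of_le_two_div hε0 hε
  have hενν := mul_mul_succ_le_two hε0 hε
  have hν1 : (1 : ℚ) ≤ ν := by exact_mod_cast hν
  have hK := mul_max_zero_sum_sub_le h1 h2 (Fintype.card_fin _) hν (finRotate_apply_ne (2 * ν + 2))
  obtain ⟨β, hβ0, hKβ, hβK⟩ := exists_nonneg_mul_mem_Ico hν (le_max_left 0 _)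
  have hβ : ε * (ν * β) < 2 * ν - 2 + ε * ν := by
    linarith [mul_lt_mul_of_pos_left hβK hε0]
  have hεν : ε * ν ≤ 1 := by nlinarith
  have hβ' : ε * (ν * β) < 2 * ν := by linarith
  refine ⟨β, hβ0, hKβ, ?_, fun i _ => ?_, fun i => ?_⟩
  · suffices ((ν + 1) * β : ℚ) < m 0 by exact_mod_cast this.le
    refine lt_of_mul_lt_mul_left (a := ε * ν) ?_ (by positivity)
    nlinarith [h1 0]
  · suffices (ν * β : ℚ) < m i by exact_mod_cast this.le
    exact lt_of_mul_lt_mul_left (by linarith [h1 i]) hε0.le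
  · suffices (β : ℚ) < d - m i by exact_mod_cast this.le
    refine lt_of_mul_lt_mul_left (a := ε * ν) ?_ (by positivity)
    nlinarith [two_le_mul_sub h1 h2 i]

/-- Existence of the integer `β` used to split off `β` copies of the strict transform of
the pointed cone `J(L₁, σ_ν)` over the `ν`-th secant variety in the odd-dimensional
(`n = 2ν + 1`) case of the abundance theorem: `k_C ≤ ν·β`, `(ν+1)·β ≤ m₁`,
`ν·β ≤ mᵢ` for `i ≥ 2`, and `β ≤ d - mᵢ` for all `i`. -/
theorem stmt_11 (ν : ℕ) (hν : 2 ≤ ν)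
    (ε : ℚ) (hε0 : 0 < ε) (hε : ε ≤ 2 / ((ν : ℚ) ^ 2 + (ν : ℚ)))
    (d : ℤ) (m : Fin (2 * ν + 4) → ℤ)
    (h1 : ∀ i, 2 * (ν : ℚ) ≤ ε * (m i : ℚ))
    (h2 : ∀ i j, i ≠ j → ε * ((m i : ℚ) + (m j : ℚ) - (d : ℚ)) ≤ 2 * (ν : ℚ) - 2) :
    ∃ β : ℤ, 0 ≤ β ∧
      max 0 ((∑ i, m i) - (2 * (ν : ℤ) + 1) * d) ≤ (ν : ℤ) * β ∧
      ((ν : ℤ) + 1) * β ≤ m 0 ∧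
      (∀ i : Fin (2 * ν + 4), i ≠ 0 → (ν : ℤ) * β ≤ m i) ∧
      (∀ i, β ≤ d - m i) :=
  stmt_11_general ν ε hε0 hε d m h1 h2
end

section
/- Let n ≥ 1, 0 ≤ r ≤ n, and let p_1, …, p_{r+1} ∈ K^n be affinely independent points. Let d ≥ 0 and m_1, …, m_{r+1} ≥ 0 be integers. Then every polynomial F ∈ K[x_1,…,x_n] of total degree ≤ d having multiplicity at least m_i at p_i for each i = 1, …, r+1 has multiplicity at least max{0, Σ_{i=1}^{r+1} m_i − r·d} at every point of the affine span of p_1, …, p_{r+1}. (The linear cycle L_I spanned by the points indexed by I is contained in the base locus of the linear system with multiplicity at least k_I = max{0, Σ_{i∈I} m_i − r·d}.) -/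
/-!
Restricted to the line through `x` and `y`, a polynomial `F` of degree `≤ d` with multiplicity
`≥ a` at `x` and `≥ b` at `y` becomes a univariate polynomial of degree `≤ d` vanishing to order
`a` at `0` and `b` at `1`, hence zero when `a + b > d`. Applied to the partial derivatives
`∂^α F`, which have degree `≤ d - |α|` and multiplicities `≥ a - |α|`, `≥ b - |α|`, this shows that
`F` has multiplicity `≥ a + b - d` along the whole line.

The theorem follows by induction on `r`. Some barycentric weight of a point `q` in the span of
`p_0, …, p_r` differs from `1`, say that of `p_j`; then `q` lies on the line joining `p_j` to a
point of the span of the other `r` points, where `F` has multiplicity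
`≥ ∑_{i ≠ j} m_i - (r - 1) d` by induction, and the line lemma adds `m_j - d`.
-/

/-- Iterated partial derivative `∂^α` as a linear endomorphism of the polynomial ring. -/
noncomputable def pd {K : Type*} [CommSemiring K] {n : ℕ} (α : Fin n → ℕ) :
    MvPolynomial (Fin n) K →ₗ[K] MvPolynomial (Fin n) K :=
  (List.finRange n).foldl
    (fun L i => ((MvPolynomial.pderiv i).toLinearMap ^ α i) ∘ₗ L) LinearMap.id

/-- `F` has multiplicity at least `m` at `p`: all partial derivatives of order `≤ m - 1`
vanish at `p`. -/
def hasMultAtLeast {K : Type*} [CommSemiring K] {n : ℕ} (m : ℕ) (p : Fin n → K)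
    (F : MvPolynomial (Fin n) K) : Prop :=
  ∀ α : Fin n → ℕ, (∑ j, α j) < m → MvPolynomial.eval p (pd α F) = 0

open MvPolynomial
open scoped Polynomial

namespace MvPolynomial

variable {R σ : Type*} [CommRing R]

theorem pderiv_pderiv_comm (i j : σ) (f : MvPolynomial σ R) :
    pderiv i (pderiv j f) = pderiv j (pderiv i f) := by
  classical
  have h : ⁅pderiv (R := R) i, pderiv (R := R) j⁆ = 0 := by
    refine derivation_ext fun k => ?_
    rw [Derivation.commutator_apply]
    simp [pderiv_X, Pi.single_apply, apply_ite]
  have := congr($h f)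
  rwa [Derivation.commutator_apply, Derivation.zero_apply, sub_eq_zero] at this

theorem commute_pderiv (i j : σ) :
    Commute (pderiv i).toLinearMap ((pderiv j).toLinearMap : Module.End R (MvPolynomial σ R)) :=
  LinearMap.ext (pderiv_pderiv_comm i j)

theorem totalDegree_pderiv_le (i : σ) (f : MvPolynomial σ R) :
    (pderiv i f).totalDegree ≤ f.totalDegree - 1 := by
  classical
  refine Finset.sup_le fun s hs => ?_
  rw [mem_support_iff, coeff_pderiv] at hs
  have := le_totalDegree (mem_support_iff.2 (left_ne_zero_of_mul hs))
  rw [Finsupp.sum_add_index' (fun _ => rfl) (fun _ _ _ => rfl),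
    Finsupp.sum_single_index rfl] at this
  omega

theorem pderiv_eq_zero_of_totalDegree_eq_zero {f : MvPolynomial σ R} (h : f.totalDegree = 0)
    (i : σ) : pderiv i f = 0 := by
  rw [totalDegree_eq_zero_iff_eq_C.1 h, pderiv_C]

noncomputable def dirDeriv [Fintype σ] (v : σ → R) :
    Derivation R (MvPolynomial σ R) (MvPolynomial σ R) :=
  ∑ i, v i • pderiv i

theorem dirDeriv_apply [Fintype σ] (v : σ → R) (f : MvPolynomial σ R) :
    dirDeriv v f = ∑ i, v i • pderiv i f := by
  rw [dirDeriv, ← Derivation.coeFnAddMonoidHom_apply, map_sum, Finset.sum_apply]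
  rfl

theorem dirDeriv_X [Fintype σ] (v : σ → R) (i : σ) : dirDeriv v (X i) = C (v i) := by
  classical
  simp [dirDeriv_apply, pderiv_X, Pi.single_apply, smul_eq_C_mul]

noncomputable def restrictLine (x y : σ → R) : MvPolynomial σ R →ₐ[R] R[X] :=
  aeval fun i => Polynomial.C (x i) + Polynomial.C (y i - x i) * Polynomial.X

theorem eval_restrictLine (x y : σ → R) (F : MvPolynomial σ R) (t : R) :
    (restrictLine x y F).eval t = eval (AffineMap.lineMap x y t) F := by
  rw [← Polynomial.coe_aeval_eq_eval, restrictLine, ← AlgHom.comp_apply, comp_aeval,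
    aeval_eq_eval]
  congr 2
  funext i
  simp only [Polynomial.coe_aeval_eq_eval, Polynomial.eval_add, Polynomial.eval_C,
    Polynomial.eval_mul, Polynomial.eval_X, AffineMap.lineMap_apply_module', Pi.add_apply,
    Pi.smul_apply, Pi.sub_apply, smul_eq_mul]
  ring

theorem natDegree_restrictLine_le (x y : σ → R) (F : MvPolynomial σ R) :
    (restrictLine x y F).natDegree ≤ F.totalDegree := by
  have := aeval_natDegree_le (n := 1) F le_rfl
    (fun i => Polynomial.C (x i) + Polynomial.C (y i - x i) * Polynomial.X) fun i =>
    (Polynomial.natDegree_add_le _ _).trans <| max_le (by simp) <|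
      (Polynomial.natDegree_C_mul_le (y i - x i) _).trans Polynomial.natDegree_X_le
  rwa [mul_one] at this

theorem derivative_restrictLine [Fintype σ] (x y : σ → R) (F : MvPolynomial σ R) :
    Polynomial.derivative (restrictLine x y F) = restrictLine x y (dirDeriv (y - x) F) := by
  induction F using MvPolynomial.induction_on with
  | C a => simp [restrictLine]
  | add p q hp hq => simp only [map_add, hp, hq]
  | mul_X p i hp =>
    simp only [map_mul, Polynomial.derivative_mul, hp, Derivation.leibniz, map_add, smul_eq_mul,
      dirDeriv_X]
    simp only [restrictLine, map_sub, aeval_X, Polynomial.derivative_add, Polynomial.derivative_C,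
      Polynomial.derivative_mul, Polynomial.derivative_X, Pi.sub_apply, algHom_C,
      Polynomial.algebraMap_eq]
    ring

theorem iterate_derivative_restrictLine [Fintype σ] (x y : σ → R) (F : MvPolynomial σ R)
    (k : ℕ) :
    Polynomial.derivative^[k] (restrictLine x y F)
      = restrictLine x y ((dirDeriv (y - x))^[k] F) := by
  induction k generalizing F with
  | zero => rfl
  | succ k ih => rw [Function.iterate_succ_apply, derivative_restrictLine, ih]; rfl

end MvPolynomial

section PartialDerivatives

variable {R : Type*} [CommRing R] {n : ℕ}

theorem pd_eq_noncommProd (α : Fin n → ℕ) :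
    pd (K := R) α = Finset.univ.noncommProd (fun i => (pderiv i).toLinearMap ^ α i)
      (Set.pairwise_of_forall _ _ fun i j => (commute_pderiv i j).pow_pow _ _) := by
  have foldl_eq : ∀ (l : List (Fin n)) (L : Module.End R (MvPolynomial (Fin n) R)),
      l.foldl (fun L i => ((pderiv i).toLinearMap ^ α i) ∘ₗ L) L
        = (l.map fun i => (pderiv i).toLinearMap ^ α i).reverse.prod * L := by
    intro l
    induction l with
    | nil => simp
    | cons i l ih => intro L; simp [ih, Module.End.mul_eq_comp, LinearMap.comp_assoc]
  rw [pd, foldl_eq, ← Module.End.one_eq_id, mul_one]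
  simp only [Finset.noncommProd, Fin.univ_val_map, Multiset.noncommProd_coe, List.ofFn_eq_map]
  exact (List.reverse_perm _).prod_eq'
    (List.pairwise_reverse.2 <| List.pairwise_map.2 <|
      List.pairwise_of_forall fun i j => (commute_pderiv j i).pow_pow _ _)

theorem pd_add (α β : Fin n → ℕ) : pd (K := R) (α + β) = pd α * pd β := by
  simp only [pd_eq_noncommProd, Pi.add_apply, pow_add]
  exact Finset.noncommProd_mul_distrib _ _ _ _
    (Set.pairwise_of_forall _ _ fun i j => (commute_pderiv i j).pow_pow _ _)

theorem pd_zero : pd (K := R) (0 : Fin n → ℕ) = 1 := by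
  simp only [pd_eq_noncommProd, Pi.zero_apply, pow_zero]
  exact (Finset.noncommProd_eq_pow_card _ _ _ _ fun _ _ => rfl).trans (one_pow _)

theorem pd_single (j : Fin n) : pd (K := R) (Pi.single j 1) = (pderiv j).toLinearMap := by
  classical
  rw [pd_eq_noncommProd, ← Finset.mul_noncommProd_erase _ (Finset.mem_univ j),
    Pi.single_eq_same, pow_one]
  convert mul_one _
  exact (Finset.noncommProd_eq_pow_card _ _ _ 1 fun i hi => by
    simp [Finset.ne_of_mem_erase hi]).trans (one_pow _)

theorem pd_add_apply (α β : Fin n → ℕ) (F : MvPolynomial (Fin n) R) :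
    pd (α + β) F = pd α (pd β F) := by
  rw [pd_add]; rfl

theorem pd_zero_apply (F : MvPolynomial (Fin n) R) : pd 0 F = F := by
  rw [pd_zero]; rfl

theorem pd_single_add_apply (j : Fin n) (α : Fin n → ℕ) (F : MvPolynomial (Fin n) R) :
    pd (Pi.single j 1 + α) F = pderiv j (pd α F) := by
  rw [pd_add_apply, pd_single]; rfl

theorem exists_eq_single_add_of_sum_eq_succ {α : Fin n → ℕ} {k : ℕ} (h : ∑ i, α i = k + 1) :
    ∃ (j : Fin n) (β : Fin n → ℕ), α = Pi.single j 1 + β ∧ ∑ i, β i = k := by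
  obtain ⟨j, -, hj⟩ : ∃ j ∈ Finset.univ, α j ≠ 0 :=
    Finset.exists_ne_zero_of_sum_ne_zero (by omega)
  have hα : α = Pi.single j 1 + (α - Pi.single j 1) := by
    funext i
    rcases eq_or_ne i j with rfl | hij
    · simp only [Pi.add_apply, Pi.single_eq_same, Pi.sub_apply]; omega
    · simp [hij]
  refine ⟨j, _, hα, ?_⟩
  rw [hα] at h
  simp only [Pi.add_apply, Finset.sum_add_distrib, Finset.sum_pi_single', Finset.mem_univ,
    if_true] at h
  omega

theorem totalDegree_pd_le (α : Fin n → ℕ) (F : MvPolynomial (Fin n) R) :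
    (pd α F).totalDegree ≤ F.totalDegree - ∑ i, α i := by
  obtain ⟨k, hk⟩ : ∃ k, ∑ i, α i = k := ⟨_, rfl⟩
  induction k generalizing α F with
  | zero =>
    obtain rfl : α = 0 := funext fun i => Finset.sum_eq_zero_iff.1 hk i (Finset.mem_univ i)
    simp [pd_zero_apply]
  | succ k ih =>
    obtain ⟨j, β, rfl, hβ⟩ := exists_eq_single_add_of_sum_eq_succ hk
    rw [pd_single_add_apply, hk]
    have := ih β F hβ
    have := totalDegree_pderiv_le j (pd β F)
    omega

theorem pd_eq_zero_of_totalDegree_lt {α : Fin n → ℕ} {F : MvPolynomial (Fin n) R}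
    (h : F.totalDegree < ∑ i, α i) : pd α F = 0 := by
  obtain ⟨k, hk⟩ : ∃ k, ∑ i, α i = k + 1 := ⟨_, (Nat.succ_pred_eq_of_pos (by omega)).symm⟩
  obtain ⟨j, β, rfl, hβ⟩ := exists_eq_single_add_of_sum_eq_succ hk
  rw [pd_single_add_apply]
  refine pderiv_eq_zero_of_totalDegree_eq_zero ?_ j
  have := totalDegree_pd_le β F
  omega

theorem pd_dirDeriv (α : Fin n → ℕ) (v : Fin n → R) (F : MvPolynomial (Fin n) R) :
    pd α (dirDeriv v F) = ∑ j, v j • pd (α + Pi.single j 1) F := by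
  simp only [dirDeriv_apply, map_sum, map_smul, pd_add_apply, pd_single]
  rfl

end PartialDerivatives

section Multiplicity

variable {R : Type*} [CommRing R] {n m k : ℕ} {x : Fin n → R} {F : MvPolynomial (Fin n) R}

theorem hasMultAtLeast.mono {m' : ℕ} (h : hasMultAtLeast m x F) (hm : m' ≤ m) :
    hasMultAtLeast m' x F :=
  fun α hα => h α (hα.trans_le hm)

theorem hasMultAtLeast.eval_eq_zero (h : hasMultAtLeast m x F) (hm : 0 < m) : eval x F = 0 := by
  simpa [pd_zero_apply] using h 0 (by simpa using hm)

theorem hasMultAtLeast.pd (h : hasMultAtLeast m x F) (α : Fin n → ℕ) :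
    hasMultAtLeast (m - ∑ i, α i) x (pd α F) := by
  intro β hβ
  rw [← pd_add_apply]
  exact h _ (by simp only [Pi.add_apply, Finset.sum_add_distrib]; omega)

theorem hasMultAtLeast.dirDeriv (h : hasMultAtLeast (m + 1) x F) (v : Fin n → R) :
    hasMultAtLeast m x (dirDeriv v F) := by
  intro α hα
  rw [pd_dirDeriv, map_sum]
  refine Finset.sum_eq_zero fun j _ => ?_
  rw [smul_eval, h _ (by simp [Finset.sum_add_distrib, hα]), mul_zero]

theorem hasMultAtLeast.iterate_dirDeriv (h : hasMultAtLeast (m + k) x F) (v : Fin n → R) :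
    hasMultAtLeast m x ((MvPolynomial.dirDeriv v)^[k] F) := by
  induction k generalizing F with
  | zero => exact h
  | succ k ih => exact ih (h.dirDeriv v)

theorem hasMultAtLeast.eval_iterate_dirDeriv_eq_zero (h : hasMultAtLeast m x F) (hk : k < m)
    (v : Fin n → R) : eval x ((MvPolynomial.dirDeriv v)^[k] F) = 0 :=
  ((h.mono (by omega : 1 + k ≤ m)).iterate_dirDeriv v).eval_eq_zero one_pos

end Multiplicity

namespace Polynomial

variable {K : Type*} [Field K] [CharZero K]

theorem X_sub_C_pow_dvd_of_iterate_derivative_eval_eq_zero {f : K[X]} {s : K} {a : ℕ}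
    (h : ∀ k < a, (derivative^[k] f).eval s = 0) : (X - C s) ^ a ∣ f := by
  rcases eq_or_ne f 0 with rfl | hf
  · exact dvd_zero _
  rcases Nat.eq_zero_or_pos a with rfl | ha
  · simp
  have := lt_rootMultiplicity_of_isRoot_iterate_derivative (n := a - 1) hf
    fun k hk => h k (by omega)
  exact (pow_dvd_pow _ (by omega)).trans (pow_rootMultiplicity_dvd f s)

theorem eq_zero_of_iterate_derivative_eval_eq_zero {f : K[X]} {s t : K} {a b : ℕ}
    (hst : s ≠ t) (hf : f.natDegree < a + b)
    (hs : ∀ k < a, (derivative^[k] f).eval s = 0) (ht : ∀ k < b, (derivative^[k] f).eval t = 0) :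
    f = 0 := by
  by_contra hf0
  have hdvd : (X - C s) ^ a * (X - C t) ^ b ∣ f :=
    ((isCoprime_X_sub_C_of_isUnit_sub (sub_ne_zero.2 hst).isUnit).pow).mul_dvd
      (X_sub_C_pow_dvd_of_iterate_derivative_eval_eq_zero hs)
      (X_sub_C_pow_dvd_of_iterate_derivative_eval_eq_zero ht)
  have := natDegree_le_of_dvd hdvd hf0
  rw [natDegree_mul (pow_ne_zero _ (X_sub_C_ne_zero s)) (pow_ne_zero _ (X_sub_C_ne_zero t)),
    natDegree_pow, natDegree_pow, natDegree_X_sub_C, natDegree_X_sub_C] at this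
  omega

end Polynomial

section TwoPoints

variable {K : Type*} [Field K] [CharZero K] {n a b d : ℕ} {x y : Fin n → K}
  {F : MvPolynomial (Fin n) K}

theorem eval_lineMap_eq_zero_of_hasMultAtLeast (hF : F.totalDegree < a + b)
    (hx : hasMultAtLeast a x F) (hy : hasMultAtLeast b y F) (t : K) :
    eval (AffineMap.lineMap x y t) F = 0 := by
  have hderiv (u : K) (k : ℕ) : (Polynomial.derivative^[k] (restrictLine x y F)).eval u
      = eval (AffineMap.lineMap x y u) ((dirDeriv (y - x))^[k] F) := by
    rw [iterate_derivative_restrictLine, eval_restrictLine]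
  have hzero : restrictLine x y F = 0 := by
    refine Polynomial.eq_zero_of_iterate_derivative_eval_eq_zero zero_ne_one
      ((natDegree_restrictLine_le x y F).trans_lt hF) (fun k hk => ?_) (fun k hk => ?_)
    · rw [hderiv, AffineMap.lineMap_apply_zero]
      exact hx.eval_iterate_dirDeriv_eq_zero hk _
    · rw [hderiv, AffineMap.lineMap_apply_one]
      exact hy.eval_iterate_dirDeriv_eq_zero hk _
  rw [← eval_restrictLine, hzero, Polynomial.eval_zero]

theorem hasMultAtLeast_lineMap (hF : F.totalDegree ≤ d) (hx : hasMultAtLeast a x F)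
    (hy : hasMultAtLeast b y F) (t : K) :
    hasMultAtLeast (a + b - d) (AffineMap.lineMap x y t) F := by
  intro α hα
  by_cases hdeg : F.totalDegree < ∑ i, α i
  · rw [pd_eq_zero_of_totalDegree_lt hdeg, map_zero]
  · have := totalDegree_pd_le α F
    exact eval_lineMap_eq_zero_of_hasMultAtLeast (by omega) (hx.pd α) (hy.pd α) t

end TwoPoints

theorem exists_lineMap_of_mem_affineSpan {k V : Type*} [Field k] [CharZero k] [AddCommGroup V]
    [Module k V] {r : ℕ} {p : Fin (r + 2) → V} {q : V} (hq : q ∈ affineSpan k (Set.range p)) :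
    ∃ j, ∃ s ∈ affineSpan k (Set.range (p ∘ j.succAbove)), ∃ t : k,
      q = AffineMap.lineMap s (p j) t := by
  obtain ⟨w, hw, rfl⟩ := eq_affineCombination_of_mem_affineSpan_of_fintype hq
  obtain ⟨j, hj⟩ : ∃ j, w j ≠ 1 := by
    by_contra! h
    rw [Finset.sum_congr rfl fun i _ => h i, Finset.sum_const, Finset.card_univ,
      Fintype.card_fin, nsmul_one, Nat.cast_eq_one] at hw
    omega
  have hsplit := Fin.sum_univ_succAbove w j
  set w' : Fin (r + 1) → k := fun i => w (j.succAbove i) / (1 - w j)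
  have hw' : ∑ i, w' i = 1 := by
    rw [← Finset.sum_div, div_eq_one_iff_eq (sub_ne_zero.2 hj.symm)]
    rw [hw] at hsplit
    linear_combination -hsplit
  refine ⟨j, _, affineCombination_mem_affineSpan hw' (p ∘ j.succAbove), w j, ?_⟩
  rw [Finset.affineCombination_eq_linear_combination _ _ _ hw,
    Finset.affineCombination_eq_linear_combination _ _ _ hw', AffineMap.lineMap_apply_module,
    Fin.sum_univ_succAbove _ j, Finset.smul_sum, add_comm]
  congr 1
  refine Finset.sum_congr rfl fun i _ => ?_
  rw [smul_smul, mul_div_cancel₀ _ (sub_ne_zero.2 hj.symm), Function.comp_apply]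

theorem stmt_14_general {K : Type*} [Field K] [CharZero K]
    (n r d : ℕ) (m : Fin (r + 1) → ℕ)
    (p : Fin (r + 1) → Fin n → K)
    (F : MvPolynomial (Fin n) K) (hdeg : F.totalDegree ≤ d)
    (hmult : ∀ i, hasMultAtLeast (m i) (p i) F) :
    ∀ q ∈ affineSpan K (Set.range p),
      hasMultAtLeast (((∑ i, (m i : ℤ)) - (r : ℤ) * d).toNat) q F := by
  induction r with
  | zero =>
    intro q hq
    rw [Set.range_unique (ι := Fin 1), AffineSubspace.mem_affineSpan_singleton] at hq
    subst hq
    simpa using hmult 0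
  | succ r ih =>
    intro q hq
    obtain ⟨j, s, hs, t, rfl⟩ := exists_lineMap_of_mem_affineSpan hq
    refine (hasMultAtLeast_lineMap hdeg (ih (m ∘ j.succAbove) (p ∘ j.succAbove)
      (fun i => hmult _) s hs) (hmult j) t).mono ?_
    rw [Fin.sum_univ_succAbove _ j, Nat.cast_succ, add_one_mul]
    simp only [Function.comp_apply]
    omega

/-- The linear cycle spanned by `r + 1` affinely independent points is contained in the
base locus with multiplicity at least `k_I = max{0, Σᵢ mᵢ - r·d}`: every polynomial of
degree `≤ d` with multiplicity `≥ mᵢ` at `pᵢ` has multiplicity at least `k_I` at every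
point of the affine span of the `pᵢ`. -/
theorem stmt_14 {K : Type*} [Field K] [IsAlgClosed K] [CharZero K]
    (n r d : ℕ) (hn : 1 ≤ n) (hr : r ≤ n) (m : Fin (r + 1) → ℕ)
    (p : Fin (r + 1) → Fin n → K) (hindep : AffineIndependent K p)
    (F : MvPolynomial (Fin n) K) (hdeg : F.totalDegree ≤ d)
    (hmult : ∀ i, hasMultAtLeast (m i) (p i) F) :
    ∀ q ∈ affineSpan K (Set.range p),
      hasMultAtLeast (((∑ i, (m i : ℤ)) - (r : ℤ) * d).toNat) q F :=
  stmt_14_general n r d m p F hdeg hmult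
end
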